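/- arXiv:1706.00952 — 3 statements merged into one kernel-verified Lean document; each statement's English description precedes it below -/
import Mathlib

section
/- Let ℓ be a prime different from 2, let z be a root of t^2 - 3t + 1 in an algebraic closure of 𝔽_ℓ, and let w be a square root of z. Then 𝔽_ℓ(w) = 𝔽_ℓ(w + w^{-1}). -/
/-- Let `ℓ` be a prime different from 2, `z` a root of `t² - 3t + 1` in an algebraic
closure of `𝔽_ℓ`, and `w` a square root of `z`. Then `𝔽_ℓ(w) = 𝔽_ℓ(w + w⁻¹)`. -/
theorem stmt_6 (ℓ : ℕ) [Fact (Nat.Prime ℓ)] (hℓ : ℓ ≠ 2)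
    (z w : AlgebraicClosure (ZMod ℓ))
    (hz : z ^ 2 - 3 * z + 1 = 0) (hw : w ^ 2 = z) :
    IntermediateField.adjoin (ZMod ℓ) {w} = IntermediateField.adjoin (ZMod ℓ) {w + w⁻¹} := by
  have hp : Nat.Prime ℓ := Fact.out
  have h2 : (2 : AlgebraicClosure (ZMod ℓ)) ≠ 0 := by
    have hnd : ¬ (ℓ ∣ 2) := by
      rw [Nat.prime_dvd_prime_iff_eq hp Nat.prime_two]
      exact hℓ
    have := (not_iff_not.mpr
      (CharP.cast_eq_zero_iff (AlgebraicClosure (ZMod ℓ)) ℓ 2)).mpr hnd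
    simpa using this
  subst hw
  have hf : (w ^ 2 - w - 1) * (w ^ 2 + w - 1) = 0 := by linear_combination hz
  have hsmem : w + w⁻¹ ∈ IntermediateField.adjoin (ZMod ℓ) {w} := by
    have hwmem := IntermediateField.mem_adjoin_simple_self (ZMod ℓ) w
    exact add_mem hwmem (inv_mem hwmem)
  have h2mem : (2 : AlgebraicClosure (ZMod ℓ)) ∈
      IntermediateField.adjoin (ZMod ℓ) {w + w⁻¹} := by
    have : ((2 : ℕ) : AlgebraicClosure (ZMod ℓ)) ∈
        IntermediateField.adjoin (ZMod ℓ) {w + w⁻¹} := natCast_mem _ 2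
    simpa using this
  apply le_antisymm
  · rw [IntermediateField.adjoin_le_iff, Set.singleton_subset_iff, SetLike.mem_coe]
    have hs := IntermediateField.mem_adjoin_simple_self (ZMod ℓ) (w + w⁻¹)
    rcases mul_eq_zero.mp hf with h | h
    · have hinv : w⁻¹ = w - 1 := by
        refine inv_eq_of_mul_eq_one_right ?_
        linear_combination h
      have hweq : w = (w + w⁻¹ + 1) / 2 := by
        rw [hinv]; field_simp; ring
      have := div_mem (add_mem hs (one_mem _)) h2mem
      rwa [← hweq] at this
    · have hinv : w⁻¹ = w + 1 := by
        refine inv_eq_of_mul_eq_one_right ?_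
        linear_combination h
      have hweq : w = (w + w⁻¹ - 1) / 2 := by
        rw [hinv]; field_simp; ring
      have := div_mem (sub_mem hs (one_mem _)) h2mem
      rwa [← hweq] at this
  · rw [IntermediateField.adjoin_le_iff, Set.singleton_subset_iff, SetLike.mem_coe]
    exact hsmem
end

section
/- Let ℓ ≥ 1 be odd-case data: let z = ((2ℓ+1) + i√(4ℓ+3))/(2(ℓ+1)) ∈ ℂ and let w be a square root of z. Then the field ℚ(w) is a degree-2 extension of ℚ(w + w^{-1}); in particular ℚ(w) ≠ ℚ(w + w^{-1}). -/
/-!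
Since `|z| = 1`, also `|w| = 1`, so `w⁻¹ = conj w` and `w + w⁻¹` is real; hence `ℚ(w + w⁻¹) ⊆ ℝ`.
But `w` is not real, because `z = w²` is not, and `w` is a root of `X² - (w + w⁻¹) X + 1`.
-/

open Polynomial IntermediateField

section

variable {K L : Type*} [Field K] [Field L] [Algebra K L]

theorem finrank_adjoin_eq_two_of_add_inv_mem {F : IntermediateField K L} {w : L}
    (hs : w + w⁻¹ ∈ F) (hw : w ∉ F) : Module.finrank F F⟮w⟯ = 2 := by
  have hw0 : w ≠ 0 := by rintro rfl; exact hw (zero_mem F)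
  set s : F := ⟨w + w⁻¹, hs⟩
  have hp_monic : (X ^ 2 - C s * X + 1 : F[X]).Monic := by monicity!
  have hp_deg : (X ^ 2 - C s * X + 1 : F[X]).natDegree = 2 := by compute_degree!
  have hp_root : aeval w (X ^ 2 - C s * X + 1 : F[X]) = 0 := by
    simp only [s, map_add, map_sub, map_mul, map_one, map_pow, aeval_X, aeval_C,
      IntermediateField.algebraMap_apply]
    field_simp
    ring
  have hint : IsIntegral F w := ⟨_, hp_monic, hp_root⟩
  rw [adjoin.finrank hint]
  refine le_antisymm ?_ ?_
  · exact hp_deg ▸ natDegree_le_natDegree (minpoly.min F w hp_monic hp_root)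
  · rw [minpoly.two_le_natDegree_iff hint]
    rintro ⟨x, rfl⟩
    exact hw x.2

variable (K) in
theorem adjoin_add_inv_le_adjoin (w : L) : K⟮w + w⁻¹⟯ ≤ K⟮w⟯ :=
  adjoin_simple_le_iff.mpr <|
    add_mem (mem_adjoin_simple_self K w) (inv_mem (mem_adjoin_simple_self K w))

theorem finrank_adjoin_add_inv_eq_two {w : L} (hw : w ∉ K⟮w + w⁻¹⟯) :
    Module.finrank K⟮w + w⁻¹⟯ (extendScalars (adjoin_add_inv_le_adjoin K w)) = 2 := by
  rw [extendScalars_adjoin]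
  exact finrank_adjoin_eq_two_of_add_inv_mem (mem_adjoin_simple_self K _) hw

end

namespace Complex

theorem add_inv_im_eq_zero {w : ℂ} (hw : ‖w‖ = 1) : (w + w⁻¹).im = 0 := by
  simp [inv_eq_conj hw]

theorem notMem_adjoin_rat_add_inv {w : ℂ} (hw : ‖w‖ = 1) (hw_im : w.im ≠ 0) :
    w ∉ ℚ⟮w + w⁻¹⟯ := by
  have hreal : ℚ⟮w + w⁻¹⟯ ≤ (ofRealAm.restrictScalars ℚ).fieldRange :=
    adjoin_simple_le_iff.mpr ⟨(w + w⁻¹).re, ext (by simp) (by simp [add_inv_im_eq_zero hw])⟩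
  intro hmem
  obtain ⟨r, hr⟩ := hreal hmem
  exact hw_im (by simp [← hr])

/-- A root of `q_{2ℓ+1}(t) = (ℓ + 1) t² - (2ℓ + 1) t + (ℓ + 1)`. -/
noncomputable def oddRoot (ℓ : ℕ) : ℂ :=
  ((2 * (ℓ : ℂ) + 1) + I * Real.sqrt (4 * (ℓ : ℝ) + 3)) / (2 * ((ℓ : ℂ) + 1))

theorem oddRoot_denom (ℓ : ℕ) : 2 * ((ℓ : ℂ) + 1) = ((2 * (ℓ + 1) : ℝ) : ℂ) := by
  push_cast; ring

theorem norm_oddRoot (ℓ : ℕ) : ‖oddRoot ℓ‖ = 1 := by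
  have hr : Real.sqrt (4 * (ℓ : ℝ) + 3) ^ 2 = 4 * ℓ + 3 := Real.sq_sqrt (by positivity)
  have hnum : (2 * (ℓ : ℂ) + 1) + I * Real.sqrt (4 * (ℓ : ℝ) + 3) =
      ((2 * ℓ + 1 : ℝ) : ℂ) + (Real.sqrt (4 * (ℓ : ℝ) + 3) : ℝ) * I := by
    push_cast; ring
  rw [oddRoot, hnum, oddRoot_denom, norm_div, norm_add_mul_I, norm_real,
    Real.norm_of_nonneg (by positivity), hr, div_eq_one_iff_eq (by positivity),
    Real.sqrt_eq_iff_mul_self_eq (by positivity) (by positivity)]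
  ring

theorem oddRoot_im_pos (ℓ : ℕ) : 0 < (oddRoot ℓ).im := by
  rw [oddRoot, oddRoot_denom, div_ofReal_im]
  simp only [add_im, mul_im, ofReal_im, I_re, I_im, ofReal_re, natCast_im, im_ofNat, one_im,
    mul_zero, zero_mul, zero_add, one_mul, add_zero]
  positivity

end Complex

theorem stmt_11_general (ℓ : ℕ) (z w : ℂ)
    (hz : z = ((2 * (ℓ : ℂ) + 1) + Complex.I * Real.sqrt (4 * (ℓ : ℝ) + 3)) /
      (2 * ((ℓ : ℂ) + 1)))
    (hw : w ^ 2 = z) :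
    (∃ hle : IntermediateField.adjoin ℚ {w + w⁻¹} ≤ IntermediateField.adjoin ℚ {w},
      Module.finrank (IntermediateField.adjoin ℚ {w + w⁻¹})
        (IntermediateField.extendScalars hle) = 2) ∧
    IntermediateField.adjoin ℚ {w} ≠ IntermediateField.adjoin ℚ {w + w⁻¹} := by
  have hw_sq : w ^ 2 = Complex.oddRoot ℓ := hw.trans hz
  have hw_norm : ‖w‖ = 1 := by
    rw [← pow_left_inj₀ (norm_nonneg w) zero_le_one two_ne_zero, ← norm_pow, hw_sq,
      Complex.norm_oddRoot, one_pow]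
  have hw_im : w.im ≠ 0 := fun h =>
    (Complex.oddRoot_im_pos ℓ).ne' (by rw [← hw_sq, sq, Complex.mul_im, h]; ring)
  have hw_notMem := Complex.notMem_adjoin_rat_add_inv hw_norm hw_im
  exact ⟨⟨_, finrank_adjoin_add_inv_eq_two hw_notMem⟩,
    fun h => hw_notMem (h ▸ mem_adjoin_simple_self ℚ w)⟩

/-- For `ℓ ≥ 1`, let `z = ((2ℓ+1) + i√(4ℓ+3))/(2(ℓ+1)) ∈ ℂ` and let `w` be a square
root of `z`. Then `ℚ(w)` is a degree-2 extension of `ℚ(w + w⁻¹)`;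
in particular `ℚ(w) ≠ ℚ(w + w⁻¹)`. -/
theorem stmt_11 (ℓ : ℕ) (hℓ : 1 ≤ ℓ) (z w : ℂ)
    (hz : z = ((2 * (ℓ : ℂ) + 1) + Complex.I * Real.sqrt (4 * (ℓ : ℝ) + 3)) /
      (2 * ((ℓ : ℂ) + 1)))
    (hw : w ^ 2 = z) :
    (∃ hle : IntermediateField.adjoin ℚ {w + w⁻¹} ≤ IntermediateField.adjoin ℚ {w},
      Module.finrank (IntermediateField.adjoin ℚ {w + w⁻¹})
        (IntermediateField.extendScalars hle) = 2) ∧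
    IntermediateField.adjoin ℚ {w} ≠ IntermediateField.adjoin ℚ {w + w⁻¹} :=
  stmt_11_general ℓ z w hz hw
end

section
/- For every integer a ≥ 7, the polynomial f_a(t) = t^4 - a t^3 + (2a - 1) t^2 - a t + 1 has four distinct positive real roots, one in each of the intervals (0, 1/2), (1/2, 1), (1, 2), and (2, a). -/
lemma exists_root_of_sign_change (f : ℝ → ℝ) (hf : Continuous f) {x y : ℝ}
    (hxy : x < y) (h : f x * f y < 0) : ∃ r ∈ Set.Ioo x y, f r = 0 := by
  rcases lt_or_gt_of_ne (fun h0 : f x = 0 => by simp [h0] at h) with hx | hx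
  · have hy : 0 < f y := by nlinarith
    have := intermediate_value_Ioo hxy.le hf.continuousOn (a := x) (b := y)
    have h0 : (0:ℝ) ∈ Set.Ioo (f x) (f y) := ⟨hx, hy⟩
    obtain ⟨r, hr, hr0⟩ := this h0
    exact ⟨r, hr, hr0⟩
  · have hy : f y < 0 := by nlinarith
    have := intermediate_value_Ioo' hxy.le hf.continuousOn (a := x) (b := y)
    obtain ⟨r, hr, hr0⟩ := this ⟨hy, hx⟩
    exact ⟨r, hr, hr0⟩

/-- For every integer `a ≥ 7`, the polynomial `f_a(t) = t⁴ - a t³ + (2a-1) t² - a t + 1`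
has four distinct positive real roots, one in each of the intervals
`(0, 1/2)`, `(1/2, 1)`, `(1, 2)`, `(2, a)`. -/
theorem stmt_15 (a : ℤ) (ha : 7 ≤ a) :
    ∃ r₁ r₂ r₃ r₄ : ℝ,
      r₁ ∈ Set.Ioo (0 : ℝ) (1 / 2) ∧ r₂ ∈ Set.Ioo (1 / 2 : ℝ) 1 ∧
      r₃ ∈ Set.Ioo (1 : ℝ) 2 ∧ r₄ ∈ Set.Ioo (2 : ℝ) (a : ℝ) ∧
      (∀ r ∈ ({r₁, r₂, r₃, r₄} : Set ℝ),
        r ^ 4 - (a : ℝ) * r ^ 3 + (2 * (a : ℝ) - 1) * r ^ 2 - (a : ℝ) * r + 1 = 0) := by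
  have haR : (7:ℝ) ≤ (a:ℝ) := by exact_mod_cast ha
  set f : ℝ → ℝ := fun r => r ^ 4 - (a : ℝ) * r ^ 3 + (2 * (a : ℝ) - 1) * r ^ 2 - (a : ℝ) * r + 1 with hf
  have hc : Continuous f := by fun_prop
  have h0 : f 0 = 1 := by simp [hf]
  have hhalf : f (1/2) = 13/16 - (a:ℝ)/8 := by simp [hf]; ring
  have h1 : f 1 = 1 := by simp [hf]; ring
  have h2 : f 2 = 13 - 2*(a:ℝ) := by simp [hf]; ring
  have hA : f (a:ℝ) = 2*(a:ℝ)^3 - 2*(a:ℝ)^2 + 1 := by simp [hf]; ring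
  obtain ⟨r₁, hr₁, hz₁⟩ := exists_root_of_sign_change f hc (by norm_num : (0:ℝ) < 1/2)
    (by rw [h0, hhalf]; nlinarith)
  obtain ⟨r₂, hr₂, hz₂⟩ := exists_root_of_sign_change f hc (by norm_num : (1/2:ℝ) < 1)
    (by rw [h1, hhalf]; nlinarith)
  obtain ⟨r₃, hr₃, hz₃⟩ := exists_root_of_sign_change f hc (by norm_num : (1:ℝ) < 2)
    (by rw [h1, h2]; nlinarith)
  obtain ⟨r₄, hr₄, hz₄⟩ := exists_root_of_sign_change f hc (by linarith : (2:ℝ) < (a:ℝ))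
    (by rw [h2, hA]; nlinarith [mul_nonneg (sq_nonneg (a:ℝ)) (by linarith : (0:ℝ) ≤ (a:ℝ) - 1)])
  exact ⟨r₁, r₂, r₃, r₄, hr₁, hr₂, hr₃, hr₄, by
    rintro r (rfl | rfl | rfl | rfl) <;> assumption⟩
end
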